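/- For any connected simple graph G on n ≥ 2 vertices, the Randić index satisfies R(G) ≥ √(n-1), with equality if and only if G is the star K_{1,n-1}. -/

import Mathlib

open Finset Real Matrix

/-- The Randić index of a finite simple graph:
`R(G) = ∑_{uv ∈ E(G)} 1/√(d(u)·d(v))`. -/
noncomputable def randicIndex {V : Type*} [Fintype V] (G : SimpleGraph V) : ℝ :=
  letI : DecidableRel G.Adj := Classical.decRel _
  ∑ e ∈ G.edgeFinset,
    Sym2.lift ⟨fun u v => 1 / Real.sqrt ((G.degree u : ℝ) * (G.degree v : ℝ)),
      fun u v => by simp [mul_comm]⟩ e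

/-- The algebraic connectivity of a graph on `Fin n`: the second smallest eigenvalue
of the Laplacian matrix, characterized (via Courant–Fischer, since the all-ones vector
is an eigenvector of the smallest eigenvalue `0`) as the infimum of the Rayleigh
quotient over nonzero vectors orthogonal to the all-ones vector. -/
noncomputable def algebraicConnectivity {n : ℕ} (G : SimpleGraph (Fin n)) : ℝ :=
  letI : DecidableRel G.Adj := Classical.decRel _
  sInf {r : ℝ | ∃ x : Fin n → ℝ, x ≠ 0 ∧ (∑ i, x i) = 0 ∧
    r = (x ⬝ᵥ ((G.lapMatrix ℝ).mulVec x)) / (x ⬝ᵥ x)}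

/-- The edge connectivity of a graph: the least number of edges whose deletion
disconnects the graph. -/
noncomputable def edgeConnectivity {V : Type*} [Fintype V] (G : SimpleGraph V) : ℕ :=
  sInf {k : ℕ | ∃ s : Set (Sym2 V), s ⊆ G.edgeSet ∧ s.ncard = k ∧
    ¬ (G.deleteEdges s).Connected}

/-- The star `K_{1,n-1}` on vertex set `Fin n`: vertex `0` is adjacent to all others. -/
def starGraph (n : ℕ) : SimpleGraph (Fin n) where
  Adj i j := i ≠ j ∧ ((i : ℕ) = 0 ∨ (j : ℕ) = 0)
  symm := by constructor; tauto
  loopless := by constructor; tauto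

/-!
Write `M` for the number of edges, `W(uv) = d(u) d(v)` and `S(v) = ∑_{u ~ v} d(u)`. Hölder's
inequality (two applications of Cauchy–Schwarz) gives `M³ ≤ R(G)² · ∑ W`. Double counting gives
`2 ∑ W = ∑_v d(v) S(v)`, and since every vertex outside the closed neighbourhood of `v` has degree
at least `1`, `S(v) ≤ 2M - (n - 1)`; hence `∑ W ≤ M (2M - (n - 1))`. Together with
`M² ≥ (n - 1)(2M - (n - 1))` and `M ≥ n - 1` (connectivity) this yields `R(G)² ≥ n - 1`.
In the equality case `M = n - 1`, so `G` is a tree, and `S(v) = n - 1` for every `v`; at a leaf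
this says that its neighbour is adjacent to every other vertex, which forces `G` to be a star.
-/

lemma Finset.card_pow_three_le_sq_sum_inv_sqrt_mul_sum {ι : Type*} (s : Finset ι) {w : ι → ℝ}
    (hw : ∀ i ∈ s, 0 < w i) :
    (#s : ℝ) ^ 3 ≤ (∑ i ∈ s, 1 / √(w i)) ^ 2 * ∑ i ∈ s, w i := by
  set R := ∑ i ∈ s, 1 / √(w i)
  set A := ∑ i ∈ s, √(w i)
  have hRA : (#s : ℝ) ^ 2 ≤ R * A := by
    simpa using s.sum_sq_le_sum_mul_sum_of_sq_le_mul (r := fun _ => (1 : ℝ))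
      (fun i _ => by positivity) (fun i _ => sqrt_nonneg (w i))
      (fun i hi => by simp [(sqrt_pos.2 (hw i hi)).ne'])
  have hA : A ^ 2 ≤ (∑ i ∈ s, w i) * #s := by
    simpa using s.sum_sq_le_sum_mul_sum_of_sq_le_mul (g := fun _ => (1 : ℝ))
      (fun i hi => (hw i hi).le) (fun _ _ => zero_le_one)
      (fun i hi => by rw [sq_sqrt (hw i hi).le, mul_one])
  rcases (Nat.cast_nonneg (α := ℝ) #s).eq_or_lt with hs | hs
  · rw [← hs, zero_pow three_ne_zero]
    exact mul_nonneg (sq_nonneg R) (sum_nonneg fun i hi => (hw i hi).le)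
  refine le_of_mul_le_mul_right ?_ hs
  calc (#s : ℝ) ^ 3 * #s = ((#s : ℝ) ^ 2) ^ 2 := by ring
    _ ≤ (R * A) ^ 2 := pow_le_pow_left₀ (by positivity) hRA 2
    _ = R ^ 2 * A ^ 2 := by ring
    _ ≤ R ^ 2 * ((∑ i ∈ s, w i) * #s) := by gcongr
    _ = R ^ 2 * (∑ i ∈ s, w i) * #s := by ring

lemma sqrt_sub_one_le_of_pow_three_le_sq_mul {N M Q R : ℝ} (hN : 1 < N) (hNM : N ≤ M + 1)
    (hR : 0 ≤ R) (hJ : M ^ 3 ≤ R ^ 2 * Q) (hQ : Q + M * N ≤ 2 * M ^ 2 + M) :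
    √(N - 1) ≤ R := by
  have hM : M ^ 2 ≤ R ^ 2 * (2 * M - (N - 1)) := by
    refine le_of_mul_le_mul_left ?_ (by linarith : 0 < M)
    nlinarith [sq_nonneg R]
  have hN2 : (N - 1) * (2 * M - (N - 1)) ≤ M ^ 2 := by nlinarith [sq_nonneg (M - (N - 1))]
  exact sqrt_le_iff.2 ⟨hR, le_of_mul_le_mul_right (hN2.trans hM) (by linarith)⟩

lemma eq_of_pow_three_le_sub_one_mul {N M Q : ℝ} (hN : 1 < N) (hNM : N ≤ M + 1)
    (hJ : M ^ 3 ≤ (N - 1) * Q) (hQ : Q + M * N ≤ 2 * M ^ 2 + M) :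
    M + 1 = N ∧ Q + M * N = 2 * M ^ 2 + M := by
  have hM : M ^ 2 ≤ (N - 1) * (2 * M - (N - 1)) := by
    refine le_of_mul_le_mul_left ?_ (by linarith : 0 < M)
    nlinarith
  obtain rfl : N = M + 1 := by nlinarith [sq_nonneg (M - (N - 1))]
  exact ⟨rfl, le_antisymm hQ (by nlinarith)⟩

namespace SimpleGraph

variable {V : Type*}

lemma IsTree.eq_starGraph_of_isUniversal {G : SimpleGraph V} (hG : G.IsTree) {c : V}
    (hc : G.IsUniversal c) : G = SimpleGraph.starGraph c := by
  have hle : SimpleGraph.starGraph c ≤ G := by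
    rintro u v ⟨huv, rfl | rfl⟩
    · exact hc huv
    · exact (hc huv.symm).symm
  exact le_antisymm ((isTree_iff_minimal_connected.1 hG).le_of_le (connected_starGraph c) hle) hle

lemma nonempty_iso_starGraph_iff (G : SimpleGraph V) (c : V) :
    Nonempty (G ≃g SimpleGraph.starGraph c) ↔ ∃ c', G = SimpleGraph.starGraph c' := by
  classical
  constructor
  · rintro ⟨φ⟩
    refine ⟨φ.symm c, ?_⟩
    ext u v
    rw [← φ.map_adj_iff, starGraph_adj, starGraph_adj, φ.injective.ne_iff,
      RelIso.eq_symm_apply, RelIso.eq_symm_apply]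
  · rintro ⟨c', rfl⟩
    exact ⟨⟨Equiv.swap c' c, by simp [Equiv.swap_apply_eq_iff]⟩⟩

section Degrees

variable [Fintype V] (G : SimpleGraph V) [DecidableRel G.Adj]

def degreeProduct : Sym2 V → ℕ :=
  Sym2.lift ⟨fun u v => G.degree u * G.degree v, fun _ _ => Nat.mul_comm _ _⟩

@[simp]
lemma degreeProduct_mk (u v : V) : G.degreeProduct s(u, v) = G.degree u * G.degree v := rfl

lemma degreeProduct_pos (hdeg : ∀ v, 0 < G.degree v) (e : Sym2 V) : 0 < G.degreeProduct e := by
  induction e with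
  | _ u v => exact Nat.mul_pos (hdeg u) (hdeg v)

lemma randicIndex_eq_sum_degreeProduct :
    randicIndex G = ∑ e ∈ G.edgeFinset, 1 / √(G.degreeProduct e : ℝ) := by
  unfold randicIndex
  congr! with e
  induction e with
  | _ u v => rw [Sym2.lift_mk, degreeProduct_mk, Nat.cast_mul]; congr!

lemma card_edgeFinset_pow_three_le_sq_randicIndex_mul (hdeg : ∀ v, 0 < G.degree v) :
    (#G.edgeFinset : ℝ) ^ 3 ≤ randicIndex G ^ 2 * ∑ e ∈ G.edgeFinset, (G.degreeProduct e : ℝ) := by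
  rw [randicIndex_eq_sum_degreeProduct]
  exact card_pow_three_le_sq_sum_inv_sqrt_mul_sum _ fun e _ => by
    exact_mod_cast G.degreeProduct_pos hdeg e

lemma sum_darts_edge [DecidableEq V] {M : Type*} [AddCommMonoid M] (f : Sym2 V → M) :
    ∑ d : G.Dart, f d.edge = 2 • ∑ e ∈ G.edgeFinset, f e := by
  rw [← sum_fiberwise_of_maps_to (g := Dart.edge) (t := G.edgeFinset) (by simp), smul_sum]
  refine sum_congr rfl fun e he => ?_
  rw [sum_congr rfl fun d hd => congrArg f (mem_filter.1 hd).2, sum_const,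
    G.dart_edge_fiber_card e (mem_edgeFinset.1 he)]

lemma sum_darts_fst_snd [DecidableEq V] {M : Type*} [AddCommMonoid M] (f : V → V → M) :
    ∑ d : G.Dart, f d.fst d.snd = ∑ v, ∑ u ∈ G.neighborFinset v, f v u := by
  rw [← sum_fiberwise (g := fun d : G.Dart => d.fst)]
  refine sum_congr rfl fun v _ => ?_
  rw [G.dart_fst_fiber, sum_image fun _ _ _ _ h => G.dartOfNeighborSet_injective v h]
  exact (sum_subtype _ (fun u => G.mem_neighborFinset v u) (f v)).symm

lemma two_smul_sum_edgeFinset {M : Type*} [AddCommMonoid M] (f : Sym2 V → M) :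
    2 • ∑ e ∈ G.edgeFinset, f e = ∑ v, ∑ u ∈ G.neighborFinset v, f s(v, u) := by
  classical
  rw [← sum_darts_edge, ← sum_darts_fst_snd]
  rfl

lemma two_mul_sum_degreeProduct_add (k : ℕ) :
    2 * (∑ e ∈ G.edgeFinset, G.degreeProduct e + #G.edgeFinset * k)
      = ∑ v, G.degree v * (∑ u ∈ G.neighborFinset v, G.degree u + k) := by
  have hW : 2 * ∑ e ∈ G.edgeFinset, G.degreeProduct e
      = ∑ v, G.degree v * ∑ u ∈ G.neighborFinset v, G.degree u := by
    rw [← smul_eq_mul, two_smul_sum_edgeFinset]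
    simp only [degreeProduct_mk, mul_sum]
  simp only [mul_add, sum_add_distrib, ← sum_mul, hW, sum_degrees_eq_twice_card_edges]
  ring

/-- Outside `N(v)`, the vertex `v` contributes `d(v)` and every other vertex at least `1`. -/
lemma sum_neighborFinset_degree_add_card_le (hdeg : ∀ v, 0 < G.degree v) (v : V) :
    ∑ u ∈ G.neighborFinset v, G.degree u + Fintype.card V ≤ 2 * #G.edgeFinset + 1 := by
  classical
  have hv : v ∈ (G.neighborFinset v)ᶜ := by simp
  have hsplit : ∑ u, G.degree u = ∑ u ∈ G.neighborFinset v, G.degree u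
      + (G.degree v + ∑ u ∈ (G.neighborFinset v)ᶜ.erase v, G.degree u) := by
    rw [add_sum_erase (G.neighborFinset v)ᶜ (fun u => G.degree u) hv, sum_add_sum_compl]
  have hrest : #((G.neighborFinset v)ᶜ.erase v)
      ≤ ∑ u ∈ (G.neighborFinset v)ᶜ.erase v, G.degree u := by
    simpa only [smul_eq_mul, mul_one] using
      card_nsmul_le_sum _ (fun u => G.degree u) 1 fun u _ => hdeg u
  have hcard : #((G.neighborFinset v)ᶜ.erase v) = Fintype.card V - G.degree v - 1 := by
    rw [card_erase_of_mem hv, card_compl, card_neighborFinset_eq_degree]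
  have := G.degree_lt_card_verts v
  rw [← sum_degrees_eq_twice_card_edges, hsplit]
  omega

lemma sum_degreeProduct_add_le (hdeg : ∀ v, 0 < G.degree v) :
    ∑ e ∈ G.edgeFinset, G.degreeProduct e + #G.edgeFinset * Fintype.card V
      ≤ 2 * #G.edgeFinset ^ 2 + #G.edgeFinset := by
  have hle : ∑ v, G.degree v * (∑ u ∈ G.neighborFinset v, G.degree u + Fintype.card V)
      ≤ ∑ v, G.degree v * (2 * #G.edgeFinset + 1) :=
    sum_le_sum fun v _ => Nat.mul_le_mul_left _ (G.sum_neighborFinset_degree_add_card_le hdeg v)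
  rw [← two_mul_sum_degreeProduct_add, ← sum_mul, sum_degrees_eq_twice_card_edges] at hle
  nlinarith

lemma sum_neighborFinset_degree_add_card_eq (hdeg : ∀ v, 0 < G.degree v)
    (heq : ∑ e ∈ G.edgeFinset, G.degreeProduct e + #G.edgeFinset * Fintype.card V
      = 2 * #G.edgeFinset ^ 2 + #G.edgeFinset) (v : V) :
    ∑ u ∈ G.neighborFinset v, G.degree u + Fintype.card V = 2 * #G.edgeFinset + 1 := by
  have hsum : ∑ v, G.degree v * (∑ u ∈ G.neighborFinset v, G.degree u + Fintype.card V)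
      = ∑ v, G.degree v * (2 * #G.edgeFinset + 1) := by
    rw [← two_mul_sum_degreeProduct_add, heq, ← sum_mul, sum_degrees_eq_twice_card_edges]
    ring
  have hv := (sum_eq_sum_iff_of_le fun v _ => Nat.mul_le_mul_left _
    (G.sum_neighborFinset_degree_add_card_le hdeg v)).1 hsum v (mem_univ v)
  exact Nat.eq_of_mul_eq_mul_left (hdeg v) hv

variable {G}

lemma IsTree.exists_eq_starGraph [Nontrivial V] (hG : G.IsTree)
    (hS : ∀ v, ∑ u ∈ G.neighborFinset v, G.degree u + Fintype.card V = 2 * #G.edgeFinset + 1) :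
    ∃ c, G = SimpleGraph.starGraph c := by
  obtain ⟨l, hl⟩ := hG.exists_vert_degree_one_of_nontrivial
  obtain ⟨c, hc⟩ := card_eq_one.1 ((G.card_neighborFinset_eq_degree l).trans hl)
  have hSl := hS l
  rw [hc, sum_singleton] at hSl
  have hE := hG.card_edgeFinset
  exact ⟨c, hG.eq_starGraph_of_isUniversal ((G.degree_eq_card_sub_one c).1 (by omega))⟩

lemma Connected.card_le_card_edgeFinset_add_one (hG : G.Connected) :
    Fintype.card V ≤ #G.edgeFinset + 1 := by
  simpa [Nat.card_eq_fintype_card, edgeFinset_card] using hG.card_vert_le_card_edgeSet_add_one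

end Degrees

variable [Fintype V] {G : SimpleGraph V}

lemma randicIndex_nonneg (G : SimpleGraph V) : 0 ≤ randicIndex G := by
  classical
  rw [randicIndex_eq_sum_degreeProduct]
  exact sum_nonneg fun e _ => by positivity

theorem randicIndex_starGraph (c : V) :
    randicIndex (SimpleGraph.starGraph c) = √((Fintype.card V : ℝ) - 1) := by
  classical
  have hV : ((Fintype.card V - 1 : ℕ) : ℝ) = Fintype.card V - 1 :=
    Nat.cast_pred (Fintype.card_pos_iff.2 ⟨c⟩)
  have hW : ∀ e ∈ (SimpleGraph.starGraph c).edgeFinset,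
      ((SimpleGraph.starGraph c).degreeProduct e : ℝ) = Fintype.card V - 1 := by
    intro e he
    induction e with
    | _ u v =>
      obtain ⟨huv, rfl | rfl⟩ := starGraph_adj.1 (mem_edgeFinset.1 he)
      · rw [degreeProduct_mk, degree_starGraph_center, degree_starGraph_of_ne_center huv.symm,
          mul_one, hV]
      · rw [degreeProduct_mk, degree_starGraph_center, degree_starGraph_of_ne_center huv,
          one_mul, hV]
  have hE : (#(SimpleGraph.starGraph c).edgeFinset : ℝ) = Fintype.card V - 1 := by
    rw [← (isTree_starGraph c).card_edgeFinset]
    push_cast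
    ring
  rw [randicIndex_eq_sum_degreeProduct, sum_congr rfl fun e he => by rw [hW e he], sum_const,
    nsmul_eq_mul, hE, mul_one_div, div_sqrt]

theorem Connected.sqrt_card_sub_one_le_randicIndex [Nontrivial V] (hG : G.Connected) :
    √((Fintype.card V : ℝ) - 1) ≤ randicIndex G := by
  classical
  have hdeg : ∀ v, 0 < G.degree v := fun v => hG.preconnected.degree_pos_of_nontrivial v
  exact sqrt_sub_one_le_of_pow_three_le_sq_mul (by exact_mod_cast Fintype.one_lt_card)
    (by exact_mod_cast hG.card_le_card_edgeFinset_add_one) (randicIndex_nonneg G)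
    (G.card_edgeFinset_pow_three_le_sq_randicIndex_mul hdeg)
    (by exact_mod_cast G.sum_degreeProduct_add_le hdeg)

theorem Connected.randicIndex_eq_sqrt_card_sub_one_iff [Nontrivial V] (hG : G.Connected) :
    randicIndex G = √((Fintype.card V : ℝ) - 1) ↔ ∃ c, G = SimpleGraph.starGraph c := by
  classical
  refine ⟨fun h => ?_, fun ⟨c, hc⟩ => hc ▸ randicIndex_starGraph c⟩
  have hdeg : ∀ v, 0 < G.degree v := fun v => hG.preconnected.degree_pos_of_nontrivial v
  have hN : (1 : ℝ) < Fintype.card V := by exact_mod_cast Fintype.one_lt_card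
  have hJ := G.card_edgeFinset_pow_three_le_sq_randicIndex_mul hdeg
  rw [h, sq_sqrt (by linarith)] at hJ
  obtain ⟨hM, hQ⟩ := eq_of_pow_three_le_sub_one_mul hN
    (by exact_mod_cast hG.card_le_card_edgeFinset_add_one) hJ
    (by exact_mod_cast G.sum_degreeProduct_add_le hdeg)
  have hT : G.IsTree := isTree_iff_connected_and_card.2 ⟨hG, by
    simpa [Nat.card_eq_fintype_card, edgeFinset_card] using (by exact_mod_cast hM :
      #G.edgeFinset + 1 = Fintype.card V)⟩
  exact hT.exists_eq_starGraph (G.sum_neighborFinset_degree_add_card_eq hdeg (by exact_mod_cast hQ))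

end SimpleGraph

theorem randicIndex_ge_sqrt_card_sub_one
    {n : ℕ} (hn : 2 ≤ n) (G : SimpleGraph (Fin n)) (hG : G.Connected) :
    randicIndex G ≥ Real.sqrt ((n : ℝ) - 1) ∧
    (randicIndex G = Real.sqrt ((n : ℝ) - 1) ↔ Nonempty (G ≃g starGraph n)) := by
  have : Nontrivial (Fin n) := Fin.nontrivial_iff_two_le.2 hn
  have hstar : starGraph n = SimpleGraph.starGraph ⟨0, by omega⟩ := by
    ext u v
    simp [starGraph, Fin.ext_iff]
  have hcard : (n : ℝ) = Fintype.card (Fin n) := by simp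
  rw [hcard, hstar, SimpleGraph.nonempty_iso_starGraph_iff]
  exact ⟨hG.sqrt_card_sub_one_le_randicIndex, hG.randicIndex_eq_sqrt_card_sub_one_iff⟩
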